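/- Let ε ∈ (0,1) and let A ∈ {−1,0,1}^{n×n} be positive semidefinite. Let G be a simple graph on vertex set [n] such that any two disjoint subsets of vertices, each of size at least (ε/6)n, are joined by at least one edge. Let Ḡ be the simple graph on [n] with an edge {i,j} if and only if {i,j} is an edge of G and |A_{ij}| = 1. For each connected component C of Ḡ with |C| > εn/2, choose any vertex j_C ∈ C, and define Ã = Σ_{C : |C| > εn/2} A_{j_C}·A_{j_C}ᵀ, where A_j ∈ ℝⁿ denotes the j-th column of A. Then Ã is positive semidefinite with entries in {−1,0,1} and ‖A − Ã‖₂ ≤ εn. -/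

import Mathlib

open Matrix BigOperators

/-- The spectral (operator) norm of a real square matrix. -/
noncomputable def specNorm {m : ℕ} (M : Matrix (Fin m) (Fin m) ℝ) : ℝ :=
  ‖LinearMap.toContinuousLinearMap (Matrix.toEuclideanLin M)‖

/-- The `n × n` all-ones matrix. -/
def allOnes (m : ℕ) : Matrix (Fin m) (Fin m) ℝ := Matrix.of fun _ _ => 1

/-- Euclidean norm of a vector in `ℝⁿ`. -/
noncomputable def vnorm {m : ℕ} (x : Fin m → ℝ) : ℝ := Real.sqrt (∑ i, (x i) ^ 2)

/-- The (unsorted) singular values of a real square matrix: square roots of the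
eigenvalues of `Aᵀ A`. -/
noncomputable def svRaw {m : ℕ} (A : Matrix (Fin m) (Fin m) ℝ) : Fin m → ℝ :=
  fun j => Real.sqrt ((show (Aᵀ * A).IsHermitian by simpa using Matrix.isHermitian_conjTranspose_mul_self A).eigenvalues j)

/-- `sval A i` is the `i`-th largest singular value of `A` (1-based indexing);
it is `0` for `i = 0` and for `i > m`. -/
noncomputable def sval {m : ℕ} (A : Matrix (Fin m) (Fin m) ℝ) (i : ℕ) : ℝ :=
  if h : 1 ≤ i ∧ i ≤ m then (svRaw A ∘ Tuple.sort (svRaw A)) ⟨m - i, by omega⟩ else 0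

/-- The nuclear (Schatten-1) norm of a real square matrix: the sum of its singular values. -/
noncomputable def nuclearNorm {m : ℕ} (A : Matrix (Fin m) (Fin m) ℝ) : ℝ :=
  ∑ j, svRaw A j

/-- The smallest eigenvalue of a symmetric real matrix, via the Rayleigh quotient. -/
noncomputable def lamMin {m : ℕ} (A : Matrix (Fin m) (Fin m) ℝ) : ℝ :=
  sInf {r : ℝ | ∃ x : Fin m → ℝ, vnorm x = 1 ∧ r = x ⬝ᵥ (A *ᵥ x)}

/-- The approximation built from one column of `A` per large connected component:
`Ã = Σ_{j ∈ J} A_j A_jᵀ`, where `A_j` is the `j`-th column of `A`. -/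
noncomputable def compApprox {n : ℕ} (A : Matrix (Fin n) (Fin n) ℝ)
    (J : Finset (Fin n)) : Matrix (Fin n) (Fin n) ℝ :=
  ∑ j ∈ J, Matrix.vecMulVec (fun i => A i j) (fun i => A i j)


/-!
If `A` is positive semidefinite with entries in `{-1, 0, 1}` and `A i j ≠ 0`, the quadratic form
of `A` vanishes at `eᵢ - A i j • eⱼ`, so this vector lies in the kernel and
`A i k = A i j * A j k` for all `k`.
Thus `A` is block diagonal with rank-one sign blocks, and every edge of `G` inside a block is an
edge of `Ḡ`. By expansion, two large components of `Ḡ` cannot lie in one block, so `Ã` is `A`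
with the blocks containing no large component deleted. A row of `A - Ã` is therefore supported
in one block all of whose `Ḡ`-components are small; expansion bounds such a set by `5εn/6`, and
the Schur test bounds the spectral norm of a symmetric matrix by its largest absolute row sum.
-/

open Finset SimpleGraph

def SimpleGraph.IsExpanding {V : Type*} (G : SimpleGraph V) (b : ℝ) : Prop :=
  ∀ X Y : Set V, Disjoint X Y → b ≤ X.ncard → b ≤ Y.ncard → ∃ x ∈ X, ∃ y ∈ Y, G.Adj x y

theorem Finset.exists_card_filter_mem_Ico {α β : Type*} [DecidableEq β] (f : α → β)
    (K : Finset α) {b s : ℝ} (hb : 0 < b) (hs : ∀ y, (#{x ∈ K | f x = y} : ℝ) ≤ s)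
    (hK : b ≤ #K) :
    ∃ T : Finset β, b ≤ #{x ∈ K | f x ∈ T} ∧ (#{x ∈ K | f x ∈ T} : ℝ) < b + s := by
  classical
  have hall : {x ∈ K | f x ∈ K.image f} = K :=
    filter_true_of_mem fun x hx => mem_image_of_mem f hx
  obtain ⟨T, hT, hmin⟩ :=
    ({T ∈ (K.image f).powerset | b ≤ #{x ∈ K | f x ∈ T}}).exists_min_image card
      ⟨K.image f, mem_filter.2 ⟨mem_powerset_self _, by rwa [hall]⟩⟩
  rw [mem_filter, mem_powerset] at hT
  obtain ⟨t, ht⟩ : T.Nonempty := by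
    rw [nonempty_iff_ne_empty]
    rintro rfl
    simp only [notMem_empty, filter_false, card_empty, CharP.cast_eq_zero] at hT
    linarith
  have herase : (#{x ∈ K | f x ∈ T.erase t} : ℝ) < b := by
    by_contra! h
    have := hmin (T.erase t) (mem_filter.2 ⟨mem_powerset.2 ((erase_subset t T).trans hT.1), h⟩)
    exact (card_erase_lt_of_mem ht).not_ge this
  have hsplit : {x ∈ K | f x ∈ T} ⊆ {x ∈ K | f x ∈ T.erase t} ∪ {x ∈ K | f x = t} := by
    intro x
    simp only [mem_filter, mem_union, mem_erase]
    tauto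
  refine ⟨T, hT.2, ?_⟩
  calc (#{x ∈ K | f x ∈ T} : ℝ) ≤ #{x ∈ K | f x ∈ T.erase t} + #{x ∈ K | f x = t} := by
        exact_mod_cast (card_le_card hsplit).trans (card_union_le _ _)
    _ < b + s := add_lt_add_of_lt_of_le herase (hs t)

namespace SimpleGraph.IsExpanding

variable {V : Type*} {G : SimpleGraph V} {b : ℝ}

theorem pos (hG : G.IsExpanding b) : 0 < b := by
  by_contra! hb
  obtain ⟨x, hx, -⟩ := hG ∅ ∅ (Set.disjoint_empty _) (by simpa using hb) (by simpa using hb)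
  exact hx

/-- Greedily collect whole fibres of `f` until they weigh at least `b`; the rest of `K` still
weighs at least `b`, and an edge between the two parts would join two different fibres. -/
theorem card_lt {β : Type*} [DecidableEq β] (hG : G.IsExpanding b) (f : V → β) (K : Finset V)
    {s : ℝ} (hs₀ : 0 ≤ s) (hs : ∀ y, (#{x ∈ K | f x = y} : ℝ) ≤ s)
    (hK : ∀ x ∈ K, ∀ y ∈ K, G.Adj x y → f x = f y) :
    (#K : ℝ) < 2 * b + s := by
  by_contra! hKb
  obtain ⟨T, hbX, hXs⟩ := K.exists_card_filter_mem_Ico f hG.pos hs (by linarith [hG.pos])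
  have hXY : (#{x ∈ K | f x ∈ T} : ℝ) + #{x ∈ K | f x ∉ T} = #K := by
    exact_mod_cast card_filter_add_card_filter_not _
  obtain ⟨x, hx, y, hy, hxy⟩ := hG (↑{x ∈ K | f x ∈ T}) (↑{x ∈ K | f x ∉ T})
    (disjoint_coe.2 (disjoint_filter_filter_not _ _ _))
    (by rwa [Set.ncard_coe_finset]) (by rw [Set.ncard_coe_finset]; linarith)
  simp only [coe_filter, Set.mem_ofPred_eq] at hx hy
  exact hy.2 (hK x hx.1 y hy.1 hxy ▸ hx.2)

end SimpleGraph.IsExpanding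

/-- The Schur test. -/
theorem specNorm_le_sqrt_mul_of_sum_abs_le {m : ℕ} (M : Matrix (Fin m) (Fin m) ℝ) {R C : ℝ}
    (hR : 0 ≤ R) (hrow : ∀ i, ∑ k, |M i k| ≤ R) (hcol : ∀ k, ∑ i, |M i k| ≤ C) :
    specNorm M ≤ √(R * C) := by
  have hsq (x : Fin m → ℝ) : ∑ i, (M *ᵥ x) i ^ 2 ≤ R * C * ∑ k, x k ^ 2 := by
    have hrow_cs (i : Fin m) : (M *ᵥ x) i ^ 2 ≤ R * ∑ k, |M i k| * x k ^ 2 :=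
      calc (M *ᵥ x) i ^ 2 = (∑ k, M i k * x k) ^ 2 := rfl
        _ ≤ (∑ k, |M i k|) * ∑ k, |M i k| * x k ^ 2 :=
          sum_sq_le_sum_mul_sum_of_sq_le_mul _ (fun _ _ => abs_nonneg _)
            (fun _ _ => by positivity) fun k _ => by rw [mul_pow, ← mul_assoc, ← sq, sq_abs]
        _ ≤ R * ∑ k, |M i k| * x k ^ 2 := by gcongr; exact hrow i
    calc ∑ i, (M *ᵥ x) i ^ 2 ≤ ∑ i, R * ∑ k, |M i k| * x k ^ 2 := sum_le_sum fun i _ => hrow_cs i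
      _ = R * ∑ k, (∑ i, |M i k|) * x k ^ 2 := by
        rw [← mul_sum, sum_comm]
        simp_rw [sum_mul]
      _ ≤ R * ∑ k, C * x k ^ 2 := by gcongr with k; exact hcol k
      _ = R * C * ∑ k, x k ^ 2 := by rw [← mul_sum, mul_assoc]
  refine ContinuousLinearMap.opNorm_le_bound _ (Real.sqrt_nonneg _) fun x => ?_
  simp only [LinearMap.coe_toContinuousLinearMap', toLpLin_apply, EuclideanSpace.norm_eq,
    Real.norm_eq_abs, sq_abs]
  rw [← Real.sqrt_mul' _ (sum_nonneg fun _ _ => sq_nonneg _)]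
  exact Real.sqrt_le_sqrt (hsq _)

theorem specNorm_le_of_isSymm_of_sum_abs_le {m : ℕ} {M : Matrix (Fin m) (Fin m) ℝ}
    (hM : M.IsSymm) {c : ℝ} (hc : 0 ≤ c) (hrow : ∀ i, ∑ k, |M i k| ≤ c) : specNorm M ≤ c := by
  refine (specNorm_le_sqrt_mul_of_sum_abs_le M hc hrow fun k => ?_).trans_eq
    (Real.sqrt_mul_self hc)
  simpa only [hM.apply] using hrow k

theorem abs_eq_ite_ne_zero {x : ℝ} (hx : x = -1 ∨ x = 0 ∨ x = 1) :
    |x| = if x ≠ 0 then 1 else 0 := by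
  rcases hx with rfl | rfl | rfl <;> norm_num

theorem sum_abs_eq_card_ne_zero {ι : Type*} [Fintype ι] (v : ι → ℝ)
    (hv : ∀ k, v k = -1 ∨ v k = 0 ∨ v k = 1) : ∑ k, |v k| = #{k | v k ≠ 0} := by
  simp_rw [abs_eq_ite_ne_zero (hv _)]
  rw [sum_boole]

namespace Matrix

variable {ι : Type*} {A : Matrix ι ι ℝ}

theorem PosSemidef.apply_eq_mul_apply_of_sq_eq_one [Fintype ι] [DecidableEq ι]
    (hA : A.PosSemidef) {i j : ι} (hi : A i i ≤ 1) (hj : A j j ≤ 1) (hij : A i j ^ 2 = 1)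
    (k : ι) : A k i = A i j * A k j := by
  have hji : A j i = A i j := (isHermitian_iff_isSymm.1 hA.isHermitian).apply i j
  set x : ι → ℝ := Pi.single i 1 - A i j • Pi.single j 1
  have hquad : star x ⬝ᵥ A *ᵥ x = A i i + A j j - 2 := by
    simp only [star_trivial, mulVec_sub, mulVec_single, MulOpposite.op_one, one_smul, mulVec_smul,
      dotProduct_sub, sub_dotProduct, single_dotProduct, col_apply, one_mul, smul_dotProduct, hji,
      smul_eq_mul, dotProduct_smul, x]
    linear_combination (A j j - 2) * hij
  have hAx : A *ᵥ x = 0 := (hA.dotProduct_mulVec_zero_iff x).1 <|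
    le_antisymm (by linarith) (hA.dotProduct_mulVec_nonneg x)
  have hk := congrFun hAx k
  simp only [mulVec_sub, mulVec_single, MulOpposite.op_one, one_smul, mulVec_smul, Pi.sub_apply,
    col_apply, Pi.smul_apply, smul_eq_mul, Pi.zero_apply, x] at hk
  linarith

theorem PosSemidef.apply_eq_apply_mul_apply_of_ne_zero [Fintype ι] (hA : A.PosSemidef)
    (hA₁ : ∀ i j, A i j = -1 ∨ A i j = 0 ∨ A i j = 1) {i j : ι} (hij : A i j ≠ 0) (k : ι) :
    A i k = A i j * A j k := by
  classical
  have hsymm := isHermitian_iff_isSymm.1 hA.isHermitian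
  have hdiag (l : ι) : A l l ≤ 1 := by rcases hA₁ l l with h | h | h <;> rw [h] <;> norm_num
  have hij₁ : A i j ^ 2 = 1 := by
    rw [← sq_abs, abs_eq_ite_ne_zero (hA₁ i j), if_pos hij, one_pow]
  rw [← hsymm.apply i k, hA.apply_eq_mul_apply_of_sq_eq_one (hdiag i) (hdiag j) hij₁,
    hsymm.apply j k]

theorem apply_ne_zero_trans (hmul : ∀ i j k, A i j ≠ 0 → A i k = A i j * A j k) {i j k : ι}
    (hij : A i j ≠ 0) (hjk : A j k ≠ 0) : A i k ≠ 0 := by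
  rw [hmul i j k hij]
  exact mul_ne_zero hij hjk

theorem apply_ne_zero_of_reachable (hmul : ∀ i j k, A i j ≠ 0 → A i k = A i j * A j k)
    {H : SimpleGraph ι} (hH : ∀ x y, H.Adj x y → A x y ≠ 0) {i j k : ι} (hij : H.Reachable i j)
    (hjk : A j k ≠ 0) : A i k ≠ 0 := by
  obtain ⟨p⟩ := hij
  induction p with
  | nil => exact hjk
  | cons hadj _ ih => exact apply_ne_zero_trans hmul (hH _ _ hadj) (ih hjk)

variable {G H : SimpleGraph ι} {b : ℝ}

theorem apply_eq_zero_of_connectedComponentMk_ne (hsymm : A.IsSymm)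
    (hmul : ∀ i j k, A i j ≠ 0 → A i k = A i j * A j k)
    (hH : ∀ x y, H.Adj x y ↔ G.Adj x y ∧ A x y ≠ 0) (hG : G.IsExpanding b) {j j' : ι}
    (hne : H.connectedComponentMk j ≠ H.connectedComponentMk j')
    (hj : b ≤ (H.connectedComponentMk j).supp.ncard)
    (hj' : b ≤ (H.connectedComponentMk j').supp.ncard) : A j j' = 0 := by
  by_contra hjj'
  have hH' x y (h : H.Adj x y) : A x y ≠ 0 := ((hH x y).1 h).2
  obtain ⟨x, hx, y, hy, hxy⟩ :=
    hG _ _ (H.pairwise_disjoint_supp_connectedComponent hne) hj hj'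
  rw [ConnectedComponent.mem_supp_iff] at hx hy
  have hxj' : A x j' ≠ 0 := apply_ne_zero_of_reachable hmul hH' (ConnectedComponent.exact hx) hjj'
  have hyx : A y x ≠ 0 :=
    apply_ne_zero_of_reachable hmul hH' (ConnectedComponent.exact hy) (by rwa [hsymm.apply])
  have hHxy : H.Adj x y := (hH x y).2 ⟨hxy, by rwa [← hsymm.apply]⟩
  exact hne (hx.symm.trans ((ConnectedComponent.connectedComponentMk_eq_of_adj hHxy).trans hy))

theorem card_row_support_lt [Fintype ι] (hsymm : A.IsSymm)
    (hmul : ∀ i j k, A i j ≠ 0 → A i k = A i j * A j k)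
    (hH : ∀ x y, H.Adj x y ↔ G.Adj x y ∧ A x y ≠ 0) (hG : G.IsExpanding b) {s : ℝ} (hs : 0 ≤ s)
    {J : Finset ι}
    (hJ : ∀ c : H.ConnectedComponent, s < c.supp.ncard → ∃ j ∈ J, H.connectedComponentMk j = c)
    {i : ι} (hi : ∀ j ∈ J, A i j = 0) : (#{k | A i k ≠ 0} : ℝ) < 2 * b + s := by
  classical
  have hH' x y (h : H.Adj x y) : A x y ≠ 0 := ((hH x y).1 h).2
  refine hG.card_lt H.connectedComponentMk _ hs (fun c => ?_) fun x hx y hy hxy => ?_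
  · by_cases hc : s < c.supp.ncard
    · obtain ⟨j, hj, rfl⟩ := hJ c hc
      rw [filter_eq_empty_iff.2 fun k hk hkj => ?_, card_empty, Nat.cast_zero]
      · exact hs
      rw [mem_filter] at hk
      have hji : A j i ≠ 0 := apply_ne_zero_of_reachable hmul hH'
        (ConnectedComponent.exact hkj).symm (by rw [hsymm.apply]; exact hk.2)
      exact hji (by rw [hsymm.apply]; exact hi j hj)
    · refine le_trans ?_ (not_lt.1 hc)
      have hsub :
          (↑({k ∈ ({k | A i k ≠ 0} : Finset ι) | H.connectedComponentMk k = c}) : Set ι) ⊆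
            c.supp := fun k hk => by simp_all
      exact_mod_cast (Set.ncard_coe_finset _).symm.trans_le (Set.ncard_le_ncard hsub)
  · rw [mem_filter] at hx hy
    have hxy' : A x y ≠ 0 := apply_ne_zero_trans hmul (by rw [hsymm.apply]; exact hx.2) hy.2
    exact ConnectedComponent.connectedComponentMk_eq_of_adj ((hH x y).2 ⟨hxy, hxy'⟩)

end Matrix

theorem posSemidef_compApprox {n : ℕ} (A : Matrix (Fin n) (Fin n) ℝ) (J : Finset (Fin n)) :
    (compApprox A J).PosSemidef :=
  posSemidef_sum J fun j _ => by simpa using posSemidef_vecMulVec_self_star fun i => A i j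

theorem compApprox_apply {n : ℕ} {A : Matrix (Fin n) (Fin n) ℝ} (hsymm : A.IsSymm)
    (hmul : ∀ i j k, A i j ≠ 0 → A i k = A i j * A j k) {J : Finset (Fin n)}
    (hJ : ∀ j ∈ J, ∀ j' ∈ J, j ≠ j' → A j j' = 0) (i k : Fin n) :
    compApprox A J i k = if ∃ j ∈ J, A i j ≠ 0 then A i k else 0 := by
  have hsum : compApprox A J i k = ∑ j ∈ J, A i j * A k j := by
    simp [compApprox, Matrix.sum_apply, vecMulVec_apply]
  rw [hsum]
  split_ifs with h
  · obtain ⟨j₀, hj₀, hij₀⟩ := h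
    rw [sum_eq_single_of_mem j₀ hj₀ fun j hj hne => ?_]
    · rw [hsymm.apply j₀ k]
      exact (hmul i j₀ k hij₀).symm
    have hij : A i j = 0 := by
      by_contra hij
      exact apply_ne_zero_trans hmul (by rwa [hsymm.apply]) hij₀ (hJ j hj j₀ hj₀ hne)
    rw [hij, zero_mul]
  · push Not at h
    exact sum_eq_zero fun j hj => by rw [h j hj, zero_mul]

theorem binary_psd_spectral_approximation_general
    (n : ℕ) (ε : ℝ)
    (A : Matrix (Fin n) (Fin n) ℝ) (hA : A.PosSemidef)
    (hent : ∀ i j, A i j = -1 ∨ A i j = 0 ∨ A i j = 1)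
    (G Gbar : SimpleGraph (Fin n))
    (hexp : ∀ X Y : Set (Fin n), Disjoint X Y →
      ε / 6 * n ≤ X.ncard → ε / 6 * n ≤ Y.ncard → ∃ x ∈ X, ∃ y ∈ Y, G.Adj x y)
    (hGbar : ∀ i j, Gbar.Adj i j ↔ G.Adj i j ∧ |A i j| = 1)
    (J : Finset (Fin n))
    (hJmem : ∀ j ∈ J, ε * n / 2 < ((Gbar.connectedComponentMk j).supp.ncard : ℝ))
    (hJrep : ∀ c : Gbar.ConnectedComponent, ε * n / 2 < (c.supp.ncard : ℝ) →
      ∃! j, j ∈ J ∧ Gbar.connectedComponentMk j = c) :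
    (compApprox A J).PosSemidef ∧
    (∀ a b, compApprox A J a b = -1 ∨ compApprox A J a b = 0 ∨ compApprox A J a b = 1) ∧
    specNorm (A - compApprox A J) ≤ ε * n := by
  have hb : 0 < ε / 6 * n := IsExpanding.pos hexp
  have hsymm : A.IsSymm := isHermitian_iff_isSymm.1 hA.isHermitian
  have hmul (i j k) (hij : A i j ≠ 0) : A i k = A i j * A j k :=
    hA.apply_eq_apply_mul_apply_of_ne_zero hent hij k
  have hH x y : Gbar.Adj x y ↔ G.Adj x y ∧ A x y ≠ 0 := by
    rw [hGbar, abs_eq_ite_ne_zero (hent x y)]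
    split_ifs with h <;> simp [h]
  have hJ : ∀ j ∈ J, ∀ j' ∈ J, j ≠ j' → A j j' = 0 := fun j hj j' hj' hne =>
    apply_eq_zero_of_connectedComponentMk_ne hsymm hmul hH hexp
      (fun h => hne ((hJrep _ (hJmem j hj)).unique ⟨hj, rfl⟩ ⟨hj', h.symm⟩))
      (by linarith [hJmem j hj]) (by linarith [hJmem j' hj'])
  have happrox := compApprox_apply hsymm hmul hJ
  have hsymm' := isHermitian_iff_isSymm.1 (posSemidef_compApprox A J).isHermitian
  refine ⟨posSemidef_compApprox A J, fun a b => ?_, ?_⟩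
  · rw [happrox]
    split_ifs
    exacts [hent a b, Or.inr (Or.inl rfl)]
  refine specNorm_le_of_isSymm_of_sum_abs_le (hsymm.sub hsymm') (by linarith) fun i => ?_
  simp_rw [Matrix.sub_apply, happrox]
  split_ifs with h
  · simp only [sub_self, abs_zero, sum_const_zero]
    linarith
  push Not at h
  simp only [sub_zero, sum_abs_eq_card_ne_zero _ (hent i)]
  have := card_row_support_lt hsymm hmul hH hexp (s := ε * n / 2) (by linarith)
    (fun c hc => (hJrep c hc).exists) h
  linarith

/-- **Deterministic spectral approximation of PSD matrices with entries in {−1,0,1}.**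
With `G` an `(ε/6)n`-expanding graph, `Ḡ` the graph of edges of `G` where `|A_{ij}|=1`,
and `J` a set containing exactly one vertex from each connected component of `Ḡ` of size
greater than `εn/2`, the matrix `Ã = Σ_{j ∈ J} A_j A_jᵀ` is PSD, has entries in
{−1,0,1}, and satisfies `‖A − Ã‖₂ ≤ εn`. -/
theorem binary_psd_spectral_approximation
    (n : ℕ) (ε : ℝ) (hε : ε ∈ Set.Ioo (0 : ℝ) 1)
    (A : Matrix (Fin n) (Fin n) ℝ) (hA : A.PosSemidef)
    (hent : ∀ i j, A i j = -1 ∨ A i j = 0 ∨ A i j = 1)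
    (G Gbar : SimpleGraph (Fin n))
    (hexp : ∀ X Y : Set (Fin n), Disjoint X Y →
      ε / 6 * n ≤ X.ncard → ε / 6 * n ≤ Y.ncard → ∃ x ∈ X, ∃ y ∈ Y, G.Adj x y)
    (hGbar : ∀ i j, Gbar.Adj i j ↔ G.Adj i j ∧ |A i j| = 1)
    (J : Finset (Fin n))
    (hJmem : ∀ j ∈ J, ε * n / 2 < ((Gbar.connectedComponentMk j).supp.ncard : ℝ))
    (hJrep : ∀ c : Gbar.ConnectedComponent, ε * n / 2 < (c.supp.ncard : ℝ) →
      ∃! j, j ∈ J ∧ Gbar.connectedComponentMk j = c) :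
    (compApprox A J).PosSemidef ∧
    (∀ a b, compApprox A J a b = -1 ∨ compApprox A J a b = 0 ∨ compApprox A J a b = 1) ∧
    specNorm (A - compApprox A J) ≤ ε * n :=
  binary_psd_spectral_approximation_general n ε A hA hent G Gbar hexp hGbar J hJmem hJrep
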